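/- arXiv:2206.08057 — 4 statements merged into one kernel-verified Lean document; each statement's English description precedes it below -/
import Mathlib

section
/- Let $n \geq 2$, $t > 0$, $x \in \mathbb{R}^n$, and let $r > n/2$. If $f : \mathbb{R}^n \to \mathbb{R}$ satisfies $|f(y)| \leq C(1+|y|^2/(1+t))^{-r}$ pointwise, then the Riesz-type integral satisfies $\int_{\mathbb{R}^n} |y|^{-(n-1)} (1 + |x-y|^2/(1+t))^{-r}\,dy \leq C' (1+t)^{1/2} (1 + |x|^2/(1+t))^{-(n-1)/2}$ for a constant $C'$ depending only on $n, r, C$. -/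
open MeasureTheory

set_option maxHeartbeats 1000000

open MeasureTheory Metric Set Real Filter

section aux

variable {n : ℕ}

local notation "E" => EuclideanSpace ℝ (Fin n)

lemma riesz_integrableOn_ball (hn : 2 ≤ n) :
    IntegrableOn (fun z : E => ‖z‖ ^ (-((n : ℝ) - 1))) (ball (0 : E) 1) volume := by
  haveI : Nonempty (Fin n) := ⟨⟨0, by omega⟩⟩
  haveI : Nontrivial E := inferInstance
  set m : ℕ := n - 1 with hm
  have hmn : n = m + 1 := by omega
  have hma : ((n : ℝ) - 1) = (m : ℝ) := by rw [hmn]; push_cast; ring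
  have hm1 : 1 ≤ m := by omega
  rw [show (fun z : E => ‖z‖ ^ (-((n : ℝ) - 1))) = (fun z : E => ‖z‖ ^ (-(m : ℝ))) by
    funext z; rw [hma]]
  refine ⟨(Measurable.aestronglyMeasurable (by fun_prop)), ?_⟩
  rw [hasFiniteIntegral_iff_ofReal
    (Eventually.of_forall fun z => rpow_nonneg (norm_nonneg _) _)]
  set A : ℕ → Set (EuclideanSpace ℝ (Fin n)) :=
    fun k => ball (0 : E) ((1/2 : ℝ)^k) \ ball (0 : E) ((1/2 : ℝ)^(k+1)) with hA
  have cover : ball (0 : E) 1 ⊆ {0} ∪ ⋃ k, A k := by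
    intro z hz
    rcases eq_or_ne z 0 with rfl | h0
    · exact Or.inl rfl
    · right
      have hz1 : ‖z‖ < 1 := mem_ball_zero_iff.1 hz
      have hzpos : 0 < ‖z‖ := norm_pos_iff.2 h0
      have hex : ∃ j : ℕ, (1/2 : ℝ)^j ≤ ‖z‖ := by
        obtain ⟨j, hj⟩ := exists_pow_lt_of_lt_one hzpos (by norm_num : (1/2:ℝ) < 1)
        exact ⟨j, hj.le⟩
      classical
      set k0 := Nat.find hex with hk0
      have hk0spec : (1/2 : ℝ)^k0 ≤ ‖z‖ := Nat.find_spec hex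
      have hk0pos : k0 ≠ 0 := by
        intro h
        rw [h] at hk0spec; simp at hk0spec; linarith
      refine mem_iUnion.2 ⟨k0 - 1, ?_⟩
      have hlt : ‖z‖ < (1/2 : ℝ)^(k0-1) := by
        by_contra h
        exact Nat.find_min hex (by omega) (not_lt.1 h)
      have hle : (1/2 : ℝ)^(k0-1+1) ≤ ‖z‖ := by
        have h9 : k0 - 1 + 1 = k0 := by omega
        rw [h9]; exact hk0spec
      exact ⟨mem_ball_zero_iff.2 hlt, fun hmem => absurd (mem_ball_zero_iff.1 hmem) (not_lt.2 hle)⟩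
  have hterm : ∀ k : ℕ, (∫⁻ z in A k, ENNReal.ofReal (‖z‖ ^ (-(m:ℝ)))) ≤
      (ENNReal.ofReal ((2:ℝ)^m) * volume (ball (0 : E) 1)) * ENNReal.ofReal (1/2) ^ k := by
    intro k
    have hpt : ∀ z ∈ A k, ENNReal.ofReal (‖z‖ ^ (-(m:ℝ))) ≤
        ENNReal.ofReal (((1/2:ℝ)^(k+1)) ^ (-(m:ℝ))) := by
      intro z hzmem
      have h1 : (1/2:ℝ)^(k+1) ≤ ‖z‖ := not_lt.1 (fun h => hzmem.2 (mem_ball_zero_iff.2 h))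
      exact ENNReal.ofReal_le_ofReal
        (rpow_le_rpow_of_nonpos (by positivity) h1 (neg_nonpos.2 (Nat.cast_nonneg m)))
    have e1 : ((1/2:ℝ)^(k+1)) ^ (-(m:ℝ)) = (2:ℝ)^((k+1)*m) := by
      rw [rpow_neg (by positivity), rpow_natCast, ← pow_mul, one_div, inv_pow, inv_inv]
    calc (∫⁻ z in A k, ENNReal.ofReal (‖z‖ ^ (-(m:ℝ))))
        ≤ ∫⁻ _ in A k, ENNReal.ofReal (((1/2:ℝ)^(k+1)) ^ (-(m:ℝ))) :=
          setLIntegral_mono measurable_const hpt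
      _ = ENNReal.ofReal (((1/2:ℝ)^(k+1)) ^ (-(m:ℝ))) * volume (A k) := setLIntegral_const _ _
      _ ≤ ENNReal.ofReal (((1/2:ℝ)^(k+1)) ^ (-(m:ℝ))) * volume (ball (0:E) ((1/2:ℝ)^k)) :=
          mul_le_mul_right (measure_mono diff_subset) _
      _ = (ENNReal.ofReal ((2:ℝ)^m) * volume (ball (0 : E) 1)) * ENNReal.ofReal (1/2) ^ k := by
          rw [Measure.addHaar_ball _ _ (by positivity : (0:ℝ) ≤ (1/2:ℝ)^k)]
          rw [← mul_assoc, ← ENNReal.ofReal_mul (by positivity)]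
          rw [mul_right_comm, ← ENNReal.ofReal_pow (by norm_num), ← ENNReal.ofReal_mul
            (by positivity)]
          congr 2
          rw [e1, finrank_euclideanSpace, Fintype.card_fin]
          have h2 : ((1/2:ℝ)^k)^n = ((2:ℝ)^(k*n))⁻¹ := by
            rw [one_div, inv_pow, inv_pow, ← pow_mul]
          have h3 : (1/2:ℝ)^k = ((2:ℝ)^k)⁻¹ := by rw [one_div, inv_pow]
          rw [h2, h3]
          rw [div_eq_div_iff (by positivity) (by positivity) |>.symm] <;> try skip
          · field_simp
            rw [← pow_add, ← pow_add]
            congr 1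
            rw [hmn]; ring
  calc (∫⁻ z in ball (0:E) 1, ENNReal.ofReal (‖z‖ ^ (-(m:ℝ))))
      ≤ ∫⁻ z in {0} ∪ ⋃ k, A k, ENNReal.ofReal (‖z‖ ^ (-(m:ℝ))) := lintegral_mono_set cover
    _ ≤ (∫⁻ z in {(0:E)}, ENNReal.ofReal (‖z‖ ^ (-(m:ℝ)))) +
        ∫⁻ z in ⋃ k, A k, ENNReal.ofReal (‖z‖ ^ (-(m:ℝ))) := lintegral_union_le _ _ _
    _ ≤ 0 + ∑' k, ∫⁻ z in A k, ENNReal.ofReal (‖z‖ ^ (-(m:ℝ))) := by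
        refine add_le_add ?_ (lintegral_iUnion_le _ _)
        rw [lintegral_singleton]
        simp [Real.zero_rpow (neg_ne_zero.2 (Nat.cast_ne_zero.2 (Nat.one_le_iff_ne_zero.mp hm1)))]
    _ ≤ 0 + ∑' k, (ENNReal.ofReal ((2:ℝ)^m) * volume (ball (0 : E) 1)) *
          ENNReal.ofReal (1/2) ^ k := by
        refine add_le_add le_rfl (ENNReal.tsum_le_tsum hterm)
    _ < ⊤ := by
        rw [zero_add, ENNReal.tsum_mul_left, ENNReal.tsum_geometric]
        refine ENNReal.mul_lt_top (ENNReal.mul_lt_top ENNReal.ofReal_lt_top measure_ball_lt_top) ?_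
        rw [ENNReal.inv_lt_top, tsub_pos_iff_lt]
        exact ENNReal.ofReal_lt_one.2 (by norm_num)

end aux

section more
variable {n : ℕ} {r : ℝ}
local notation "E" => EuclideanSpace ℝ (Fin n)

lemma riesz_integrableOn_ballR (hn : 2 ≤ n) (R : ℝ) :
    IntegrableOn (fun z : E => ‖z‖ ^ (-((n : ℝ) - 1))) (ball (0 : E) R) volume := by
  rcases le_or_gt R 1 with h | h
  · exact (riesz_integrableOn_ball hn).mono_set (ball_subset_ball h)
  · rw [← union_diff_cancel (ball_subset_ball h.le : ball (0:E) 1 ⊆ ball 0 R)]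
    refine (riesz_integrableOn_ball hn).union ?_
    refine Measure.integrableOn_of_bounded
      ((measure_mono diff_subset).trans_lt measure_ball_lt_top).ne
      (Measurable.aestronglyMeasurable (by fun_prop)) (M := 1) ?_
    filter_upwards [ae_restrict_mem (measurableSet_ball.diff measurableSet_ball)] with z hz
    have h1z : 1 ≤ ‖z‖ := not_lt.1 fun hc => hz.2 (mem_ball_zero_iff.2 hc)
    rw [Real.norm_of_nonneg (rpow_nonneg (norm_nonneg _) _)]
    refine rpow_le_one_of_one_le_of_nonpos h1z ?_
    have : (2:ℝ) ≤ n := by exact_mod_cast hn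
    linarith

lemma riesz_ball_value (hn : 2 ≤ n) {R : ℝ} (hR : 0 < R) :
    (∫ z in ball (0 : E) R, ‖z‖ ^ (-((n : ℝ) - 1))) =
      R * ∫ z in ball (0 : E) 1, ‖z‖ ^ (-((n : ℝ) - 1)) := by
  haveI : Nonempty (Fin n) := ⟨⟨0, by omega⟩⟩
  have h := MeasureTheory.Measure.setIntegral_comp_smul_of_pos (μ := (volume : Measure (EuclideanSpace ℝ (Fin n))))
      (fun z : E => ‖z‖ ^ (-((n : ℝ) - 1))) (ball (0:E) 1) hR
  rw [smul_unitBall_of_pos hR] at h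
  have hpt : ∀ x : E, ‖R • x‖ ^ (-((n : ℝ) - 1)) = R ^ (-((n : ℝ) - 1)) * ‖x‖ ^ (-((n : ℝ) - 1)) := by
    intro x
    rw [norm_smul, Real.norm_eq_abs, abs_of_pos hR, Real.mul_rpow hR.le (norm_nonneg _)]
  simp_rw [hpt, MeasureTheory.integral_const_mul, smul_eq_mul] at h
  set m : ℕ := n - 1 with hm
  have hmn : n = m + 1 := by omega
  have hma : ((n : ℝ) - 1) = (m : ℝ) := by rw [hmn]; push_cast; ring
  have hfr : Module.finrank ℝ (EuclideanSpace ℝ (Fin n)) = n := by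
    rw [finrank_euclideanSpace, Fintype.card_fin]
  rw [hfr] at h
  have hRa : R ^ (-((n : ℝ) - 1)) = (R ^ m)⁻¹ := by
    rw [hma, rpow_neg hR.le, rpow_natCast]
  rw [hRa] at h
  have hRn : (R:ℝ) ^ n = R ^ m * R := by rw [hmn, pow_succ]
  field_simp at h
  rw [show (-((n:ℝ) - 1) : ℝ) = 1 - (n:ℝ) by ring]
  have hRm : (R:ℝ) ^ m ≠ 0 := by positivity
  rw [hRn] at h
  apply mul_right_cancel₀ hRm
  rw [show (1 - (n:ℝ)) = -((n:ℝ)-1) by ring]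
  linear_combination -h

lemma g_integrable (hr : (n:ℝ)/2 < r) :
    Integrable (fun z : E => (1 + ‖z‖^2) ^ (-r)) volume := by
  have hnr : (Module.finrank ℝ (EuclideanSpace ℝ (Fin n)) : ℝ) < 2*r := by
    rw [finrank_euclideanSpace, Fintype.card_fin]; linarith
  have h := integrable_rpow_neg_one_add_norm_sq (μ := (volume : Measure (EuclideanSpace ℝ (Fin n)))) hnr
  simpa [show -(2*r)/2 = -r by ring] using h

lemma g_translate_integrable (hr : (n:ℝ)/2 < r) (w : E) :
    Integrable (fun z : E => (1 + ‖w - z‖^2) ^ (-r)) volume := by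
  have h1 := (g_integrable hr).comp_sub_right w
  have he : (fun z : E => (1 + ‖w - z‖^2 : ℝ)^(-r)) = fun z => (1 + ‖z - w‖^2 : ℝ)^(-r) := by
    funext z; rw [norm_sub_rev]
  rw [he]; exact h1

lemma g_translate_integral (hr : (n:ℝ)/2 < r) (w : E) :
    (∫ z : E, (1 + ‖w - z‖^2) ^ (-r)) = ∫ z : E, (1 + ‖z‖^2) ^ (-r) := by
  have he : (fun z : E => (1 + ‖w - z‖^2 : ℝ)^(-r)) = fun z => (1 + ‖z - w‖^2 : ℝ)^(-r) := by
    funext z; rw [norm_sub_rev]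
  rw [he]
  exact integral_sub_right_eq_self (fun z : E => (1 + ‖z‖^2 : ℝ)^(-r)) w

lemma rpow_helper {b c x s : ℝ} (hb : 0 < b) (hc : 0 < c) (hx : b / c ≤ x) (hs : 0 ≤ s) :
    x ^ (-s) ≤ c ^ s * b ^ (-s) := by
  have hbc : 0 < b / c := div_pos hb hc
  calc x ^ (-s) ≤ (b / c) ^ (-s) := rpow_le_rpow_of_nonpos hbc hx (neg_nonpos.2 hs)
    _ = b ^ (-s) / c ^ (-s) := Real.div_rpow hb.le hc.le _
    _ = c ^ s * b ^ (-s) := by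
        rw [rpow_neg hc.le, div_eq_mul_inv, inv_inv, mul_comm]

end more

section key
variable {n : ℕ} {r : ℝ}
local notation "E" => EuclideanSpace ℝ (Fin n)

lemma key_estimate (hn : 2 ≤ n) (hr : (n:ℝ)/2 < r) :
    ∃ A > 0, ∀ w : E,
      (∫ z : E, ‖z‖ ^ (-((n : ℝ) - 1)) * (1 + ‖w - z‖^2) ^ (-r)) ≤
        A * (1 + ‖w‖^2) ^ (-(((n:ℝ) - 1)/2)) := by
  haveI : Nonempty (Fin n) := ⟨⟨0, by omega⟩⟩
  have hn2 : (2:ℝ) ≤ (n:ℝ) := by exact_mod_cast hn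
  have hr0 : 0 < r := lt_of_le_of_lt (by positivity) hr
  set a : ℝ := (n:ℝ) - 1 with ha
  have ha0 : 0 < a := by rw [ha]; linarith
  set q : ℝ := ((n:ℝ) - 1)/2 with hq
  have hq0 : 0 < q := by rw [hq]; linarith
  have haq : a = 2 * q := by rw [ha, hq]; ring
  set J1 : ℝ := ∫ z in ball (0:E) 1, ‖z‖ ^ (-a) with hJ1def
  set K2 : ℝ := ∫ z : E, (1 + ‖z‖^2) ^ (-r) with hK2def
  have hJ1 : 0 ≤ J1 := integral_nonneg fun z => rpow_nonneg (norm_nonneg _) _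
  have hK2 : 0 ≤ K2 := integral_nonneg fun z => rpow_nonneg (by positivity) _
  have hA4 : (0:ℝ) ≤ (4:ℝ)^r * J1 := mul_nonneg (rpow_nonneg (by norm_num) _) hJ1
  have hA8 : (0:ℝ) ≤ (8:ℝ)^q * K2 := mul_nonneg (rpow_nonneg (by norm_num) _) hK2
  have hA2 : (0:ℝ) ≤ (J1 + K2) * (2:ℝ)^q :=
    mul_nonneg (add_nonneg hJ1 hK2) (rpow_nonneg two_pos.le _)
  refine ⟨(4:ℝ)^r * J1 + (8:ℝ)^q * K2 + (J1 + K2) * (2:ℝ)^q + 1, by linarith, ?_⟩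
  intro w
  set b : ℝ := 1 + ‖w‖^2 with hbdef
  have hb1 : 1 ≤ b := by rw [hbdef]; nlinarith [sq_nonneg ‖w‖]
  have hb0 : 0 < b := lt_of_lt_of_le one_pos hb1
  have hbq : 0 ≤ b ^ (-q) := rpow_nonneg hb0.le _
  have hfacle1 : ∀ z : E, ((1:ℝ) + ‖w - z‖^2) ^ (-r) ≤ 1 := fun z =>
    rpow_le_one_of_one_le_of_nonpos (by nlinarith [sq_nonneg ‖w - z‖]) (neg_nonpos.2 hr0.le)
  have hGw : Integrable (fun z : E => ((1:ℝ) + ‖w - z‖^2) ^ (-r)) volume :=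
    g_translate_integrable hr w
  have hGnonneg : ∀ z : E, (0:ℝ) ≤ ((1:ℝ) + ‖w - z‖^2) ^ (-r) := fun z =>
    rpow_nonneg (by positivity) _
  have hmeas : AEStronglyMeasurable
      (fun z : E => ‖z‖ ^ (-a) * ((1:ℝ) + ‖w - z‖^2) ^ (-r)) volume :=
    Measurable.aestronglyMeasurable (by fun_prop)
  have hnonneg : ∀ z : E, (0:ℝ) ≤ ‖z‖ ^ (-a) * ((1:ℝ) + ‖w - z‖^2) ^ (-r) := fun z =>
    mul_nonneg (rpow_nonneg (norm_nonneg _) _) (hGnonneg z)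
  have hint : Integrable (fun z : E => ‖z‖ ^ (-a) * ((1:ℝ) + ‖w - z‖^2) ^ (-r)) volume := by
    rw [← integrableOn_univ, ← Set.union_compl_self (ball (0:E) 1)]
    refine IntegrableOn.union ?_ ?_
    · refine Integrable.mono' (riesz_integrableOn_ball hn) hmeas.restrict ?_
      filter_upwards [ae_restrict_mem measurableSet_ball] with z _
      rw [Real.norm_of_nonneg (hnonneg z)]
      calc ‖z‖ ^ (-a) * ((1:ℝ) + ‖w - z‖^2) ^ (-r)
          ≤ ‖z‖ ^ (-a) * 1 :=
            mul_le_mul_of_nonneg_left (hfacle1 z) (rpow_nonneg (norm_nonneg _) _)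
        _ = ‖z‖ ^ (-((n:ℝ) - 1)) := by rw [mul_one]
    · refine Integrable.mono' hGw.integrableOn hmeas.restrict ?_
      filter_upwards [ae_restrict_mem measurableSet_ball.compl] with z hz
      have h1z : 1 ≤ ‖z‖ := not_lt.1 fun hc => hz (mem_ball_zero_iff.2 hc)
      rw [Real.norm_of_nonneg (hnonneg z)]
      calc ‖z‖ ^ (-a) * ((1:ℝ) + ‖w - z‖^2) ^ (-r)
          ≤ 1 * ((1:ℝ) + ‖w - z‖^2) ^ (-r) :=
            mul_le_mul_of_nonneg_right
              (rpow_le_one_of_one_le_of_nonpos h1z (neg_nonpos.2 ha0.le)) (hGnonneg z)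
        _ = ((1:ℝ) + ‖w - z‖^2) ^ (-r) := one_mul _
  rcases le_or_gt ‖w‖ 1 with hw | hw
  · -- small w
    have hsplit := (integral_add_compl (measurableSet_ball :
        MeasurableSet (ball (0:E) 1)) hint).symm
    have bound1 : (∫ z in ball (0:E) 1, ‖z‖ ^ (-a) * ((1:ℝ) + ‖w - z‖^2) ^ (-r)) ≤ J1 := by
      rw [hJ1def]
      refine setIntegral_mono_on hint.integrableOn (riesz_integrableOn_ball hn)
        measurableSet_ball fun z _ => ?_
      calc ‖z‖ ^ (-a) * ((1:ℝ) + ‖w - z‖^2) ^ (-r)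
          ≤ ‖z‖ ^ (-a) * 1 :=
            mul_le_mul_of_nonneg_left (hfacle1 z) (rpow_nonneg (norm_nonneg _) _)
        _ = ‖z‖ ^ (-((n:ℝ)-1)) := by rw [mul_one]
    have bound2 : (∫ z in (ball (0:E) 1)ᶜ, ‖z‖ ^ (-a) * ((1:ℝ) + ‖w - z‖^2) ^ (-r)) ≤ K2 := by
      have step1 : (∫ z in (ball (0:E) 1)ᶜ, ‖z‖ ^ (-a) * ((1:ℝ) + ‖w - z‖^2) ^ (-r)) ≤
          ∫ z in (ball (0:E) 1)ᶜ, ((1:ℝ) + ‖w - z‖^2) ^ (-r) := by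
        refine setIntegral_mono_on hint.integrableOn hGw.integrableOn
          measurableSet_ball.compl fun z hz => ?_
        have h1z : 1 ≤ ‖z‖ := not_lt.1 fun hc => hz (mem_ball_zero_iff.2 hc)
        calc ‖z‖ ^ (-a) * ((1:ℝ) + ‖w - z‖^2) ^ (-r)
            ≤ 1 * ((1:ℝ) + ‖w - z‖^2) ^ (-r) :=
              mul_le_mul_of_nonneg_right
                (rpow_le_one_of_one_le_of_nonpos h1z (neg_nonpos.2 ha0.le)) (hGnonneg z)
          _ = ((1:ℝ) + ‖w - z‖^2) ^ (-r) := one_mul _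
      have step2 : (∫ z in (ball (0:E) 1)ᶜ, ((1:ℝ) + ‖w - z‖^2) ^ (-r)) ≤ K2 := by
        rw [hK2def, ← g_translate_integral hr w]
        exact setIntegral_le_integral hGw (Filter.Eventually.of_forall hGnonneg)
      exact step1.trans step2
    have hb2 : b ≤ 2 := by rw [hbdef]; nlinarith [norm_nonneg w]
    have hlow : 1 ≤ (2:ℝ)^q * b^(-q) := by
      have h1 : (2:ℝ)^(-q) ≤ b^(-q) := rpow_le_rpow_of_nonpos hb0 hb2 (neg_nonpos.2 hq0.le)
      calc (1:ℝ) = (2:ℝ)^q * (2:ℝ)^(-q) := by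
            rw [← Real.rpow_add two_pos]; norm_num
        _ ≤ (2:ℝ)^q * b^(-q) := mul_le_mul_of_nonneg_left h1 (rpow_nonneg two_pos.le _)
    calc (∫ z : E, ‖z‖ ^ (-a) * ((1:ℝ) + ‖w - z‖^2) ^ (-r)) ≤ J1 + K2 := by
          rw [hsplit]; exact add_le_add bound1 bound2
      _ = (J1 + K2) * 1 := (mul_one _).symm
      _ ≤ (J1 + K2) * ((2:ℝ)^q * b^(-q)) :=
          mul_le_mul_of_nonneg_left hlow (by positivity)
      _ ≤ ((4:ℝ)^r * J1 + (8:ℝ)^q * K2 + (J1 + K2) * (2:ℝ)^q + 1) * b ^ (-q) := by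
          nlinarith [mul_nonneg (mul_nonneg (add_nonneg hJ1 hK2) (rpow_nonneg (two_pos.le) q)) hbq, hA4, hA8, hbq]
  · -- large w
    have hR : 0 < ‖w‖/2 := by linarith
    have hsplit := (integral_add_compl (measurableSet_ball :
        MeasurableSet (ball (0:E) (‖w‖/2))) hint).symm
    have bound1 : (∫ z in ball (0:E) (‖w‖/2), ‖z‖ ^ (-a) * ((1:ℝ) + ‖w - z‖^2) ^ (-r)) ≤
        (4:ℝ)^r * b^(-r) * ((‖w‖/2) * J1) := by
      have hptw : ∀ z ∈ ball (0:E) (‖w‖/2),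
          ‖z‖ ^ (-a) * ((1:ℝ) + ‖w - z‖^2) ^ (-r) ≤ ((4:ℝ)^r * b^(-r)) * ‖z‖ ^ (-a) := by
        intro z hz
        have hz2 : ‖z‖ < ‖w‖/2 := mem_ball_zero_iff.1 hz
        have hwz : ‖w‖/2 ≤ ‖w - z‖ := by
          have := norm_sub_norm_le w z
          linarith
        have hbig : b/4 ≤ 1 + ‖w - z‖^2 := by
          have h1 : (‖w‖/2)^2 ≤ ‖w - z‖^2 := pow_le_pow_left₀ hR.le hwz 2
          rw [hbdef]; nlinarith
        have := rpow_helper hb0 (by norm_num : (0:ℝ) < 4) hbig hr0.le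
        calc ‖z‖ ^ (-a) * ((1:ℝ) + ‖w - z‖^2) ^ (-r)
            ≤ ‖z‖ ^ (-a) * ((4:ℝ)^r * b^(-r)) :=
              mul_le_mul_of_nonneg_left this (rpow_nonneg (norm_nonneg _) _)
          _ = ((4:ℝ)^r * b^(-r)) * ‖z‖ ^ (-a) := mul_comm _ _
      calc (∫ z in ball (0:E) (‖w‖/2), ‖z‖ ^ (-a) * ((1:ℝ) + ‖w - z‖^2) ^ (-r))
          ≤ ∫ z in ball (0:E) (‖w‖/2), ((4:ℝ)^r * b^(-r)) * ‖z‖ ^ (-a) := by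
            refine setIntegral_mono_on hint.integrableOn ?_ measurableSet_ball hptw
            exact ((riesz_integrableOn_ballR hn (‖w‖/2)).const_mul _)
        _ = ((4:ℝ)^r * b^(-r)) * ∫ z in ball (0:E) (‖w‖/2), ‖z‖ ^ (-a) := by
            rw [MeasureTheory.integral_const_mul]
        _ = (4:ℝ)^r * b^(-r) * ((‖w‖/2) * J1) := by
            rw [hJ1def, riesz_ball_value hn hR]
    have bound2 : (∫ z in (ball (0:E) (‖w‖/2))ᶜ, ‖z‖ ^ (-a) * ((1:ℝ) + ‖w - z‖^2) ^ (-r)) ≤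
        (‖w‖/2) ^ (-a) * K2 := by
      have step1 : (∫ z in (ball (0:E) (‖w‖/2))ᶜ, ‖z‖ ^ (-a) * ((1:ℝ) + ‖w - z‖^2) ^ (-r)) ≤
          ∫ z in (ball (0:E) (‖w‖/2))ᶜ, (‖w‖/2) ^ (-a) * ((1:ℝ) + ‖w - z‖^2) ^ (-r) := by
        refine setIntegral_mono_on hint.integrableOn (hGw.const_mul _).integrableOn
          measurableSet_ball.compl fun z hz => ?_
        have h1z : ‖w‖/2 ≤ ‖z‖ := not_lt.1 fun hc => hz (mem_ball_zero_iff.2 hc)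
        exact mul_le_mul_of_nonneg_right
          (rpow_le_rpow_of_nonpos hR h1z (neg_nonpos.2 ha0.le)) (hGnonneg z)
      have step2 : (∫ z in (ball (0:E) (‖w‖/2))ᶜ, (‖w‖/2) ^ (-a) * ((1:ℝ) + ‖w - z‖^2) ^ (-r)) ≤
          (‖w‖/2) ^ (-a) * K2 := by
        rw [MeasureTheory.integral_const_mul]
        refine mul_le_mul_of_nonneg_left ?_ (rpow_nonneg hR.le _)
        rw [hK2def, ← g_translate_integral hr w]
        exact setIntegral_le_integral hGw (Filter.Eventually.of_forall hGnonneg)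
      exact step1.trans step2
    -- final combination
    have hwb : ‖w‖ ≤ b ^ ((1:ℝ)/2) := by
      have h1 : ‖w‖ = (‖w‖^2) ^ ((1:ℝ)/2) := by
        rw [← Real.rpow_natCast ‖w‖ 2, ← Real.rpow_mul (norm_nonneg w)]
        norm_num
      rw [h1]
      exact Real.rpow_le_rpow (by positivity) (by rw [hbdef]; linarith) (by norm_num)
    have hterm1 : b^(-r) * (‖w‖/2) ≤ b^(-q) := by
      calc b^(-r) * (‖w‖/2) ≤ b^(-r) * b^((1:ℝ)/2) := by
            refine mul_le_mul_of_nonneg_left ?_ (rpow_nonneg hb0.le _)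
            linarith
        _ = b^((1:ℝ)/2 - r) := by rw [← Real.rpow_add hb0]; ring_nf
        _ ≤ b^(-q) := Real.rpow_le_rpow_of_exponent_le hb1 (by rw [hq]; linarith)
    have hterm2 : (‖w‖/2) ^ (-a) ≤ (8:ℝ)^q * b^(-q) := by
      have hx : b/8 ≤ (‖w‖/2)^2 := by
        rw [hbdef]; nlinarith
      have h2 : ((‖w‖/2)^2 : ℝ) ^ (-q) ≤ (8:ℝ)^q * b^(-q) :=
        rpow_helper hb0 (by norm_num) hx hq0.le
      have h3 : ((‖w‖/2)^2 : ℝ) ^ (-q) = (‖w‖/2) ^ (-a) := by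
        rw [← Real.rpow_natCast (‖w‖/2) 2, ← Real.rpow_mul hR.le]
        congr 1
        rw [haq]; push_cast; ring
      rw [← h3]; exact h2
    calc (∫ z : E, ‖z‖ ^ (-a) * ((1:ℝ) + ‖w - z‖^2) ^ (-r))
        ≤ (4:ℝ)^r * b^(-r) * ((‖w‖/2) * J1) + (‖w‖/2) ^ (-a) * K2 := by
          rw [hsplit]; exact add_le_add bound1 bound2
      _ ≤ (4:ℝ)^r * J1 * b^(-q) + ((8:ℝ)^q * b^(-q)) * K2 := by
          refine add_le_add ?_ ?_
          · have h1 : (4:ℝ)^r * b^(-r) * ((‖w‖/2) * J1) = ((4:ℝ)^r * J1) * (b^(-r) * (‖w‖/2)) := by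
              ring
            rw [h1]
            calc ((4:ℝ)^r * J1) * (b^(-r) * (‖w‖/2)) ≤ ((4:ℝ)^r * J1) * b^(-q) :=
                  mul_le_mul_of_nonneg_left hterm1
                    (mul_nonneg (rpow_nonneg (by norm_num) _) hJ1)
              _ = (4:ℝ)^r * J1 * b^(-q) := rfl
          · exact mul_le_mul_of_nonneg_right hterm2 hK2
      _ ≤ ((4:ℝ)^r * J1 + (8:ℝ)^q * K2 + (J1 + K2) * (2:ℝ)^q + 1) * b ^ (-q) := by
          nlinarith [hbq, hA2]

end key

theorem stmt_0 (n : ℕ) (hn : 2 ≤ n) (r C : ℝ) (hr : r > (n : ℝ) / 2) (hC : 0 < C) :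
    ∃ C' > 0, ∀ (t : ℝ), 0 < t → ∀ (f : EuclideanSpace ℝ (Fin n) → ℝ),
      (∀ y, |f y| ≤ C * (1 + ‖y‖ ^ 2 / (1 + t)) ^ (-r)) →
      ∀ x : EuclideanSpace ℝ (Fin n),
        (∫ y : EuclideanSpace ℝ (Fin n),
            ‖y‖ ^ (-((n : ℝ) - 1)) * (1 + ‖x - y‖ ^ 2 / (1 + t)) ^ (-r))
          ≤ C' * (1 + t) ^ ((1 : ℝ) / 2) * (1 + ‖x‖ ^ 2 / (1 + t)) ^ (-(((n : ℝ) - 1) / 2)) := by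
  obtain ⟨A, hA, hkey⟩ := key_estimate (n := n) (r := r) hn hr
  refine ⟨A, hA, ?_⟩
  intro t ht f hf x
  haveI : Nonempty (Fin n) := ⟨⟨0, by omega⟩⟩
  set s : ℝ := 1 + t with hs
  have hs0 : 0 < s := by rw [hs]; linarith
  set σ : ℝ := s ^ ((1:ℝ)/2) with hσdef
  have hσ : 0 < σ := rpow_pos_of_pos hs0 _
  have hσ2 : σ^2 = s := by
    rw [hσdef, ← Real.rpow_natCast (s ^ ((1:ℝ)/2)) 2, ← Real.rpow_mul hs0.le]
    norm_num
  set w : EuclideanSpace ℝ (Fin n) := σ⁻¹ • x with hwdef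
  have hw2 : 1 + ‖x‖^2 / s = 1 + ‖w‖^2 := by
    rw [hwdef, norm_smul, Real.norm_eq_abs, abs_of_pos (inv_pos.2 hσ), mul_pow, ← hσ2]
    field_simp
  have hcomp := MeasureTheory.Measure.integral_comp_smul_of_nonneg
      (μ := (volume : Measure (EuclideanSpace ℝ (Fin n))))
      (fun y : EuclideanSpace ℝ (Fin n) => ‖y‖ ^ (-((n:ℝ)-1)) * (1 + ‖x - y‖^2 / s) ^ (-r)) σ
      (hR := hσ.le)
  have hpt : ∀ z : EuclideanSpace ℝ (Fin n),
      ‖σ • z‖ ^ (-((n:ℝ)-1)) * (1 + ‖x - σ • z‖^2 / s) ^ (-r)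
      = σ ^ (-((n:ℝ)-1)) * (‖z‖ ^ (-((n:ℝ)-1)) * (1 + ‖w - z‖^2) ^ (-r)) := by
    intro z
    have h1 : ‖σ • z‖ ^ (-((n:ℝ)-1)) = σ ^ (-((n:ℝ)-1)) * ‖z‖ ^ (-((n:ℝ)-1)) := by
      rw [norm_smul, Real.norm_eq_abs, abs_of_pos hσ, Real.mul_rpow hσ.le (norm_nonneg _)]
    have h2 : x - σ • z = σ • (w - z) := by
      rw [hwdef, smul_sub, smul_inv_smul₀ hσ.ne']
    have h3 : (1 + ‖x - σ • z‖^2 / s) = 1 + ‖w - z‖^2 := by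
      rw [h2, norm_smul, Real.norm_eq_abs, abs_of_pos hσ, mul_pow, ← hσ2]
      field_simp
    rw [h1, h3]; ring
  simp_rw [hpt] at hcomp
  rw [MeasureTheory.integral_const_mul] at hcomp
  have hfr : Module.finrank ℝ (EuclideanSpace ℝ (Fin n)) = n := by
    rw [finrank_euclideanSpace, Fintype.card_fin]
  rw [hfr, smul_eq_mul] at hcomp
  have hσn : (0:ℝ) < σ ^ n := pow_pos hσ n
  have hσna : σ^n * σ^(-((n:ℝ)-1)) = σ := by
    rw [← Real.rpow_natCast σ n, ← Real.rpow_add hσ,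
      show (n:ℝ) + -((n:ℝ)-1) = 1 by ring, Real.rpow_one]
  have hIF : (∫ y : EuclideanSpace ℝ (Fin n), ‖y‖ ^ (-((n:ℝ)-1)) * (1 + ‖x - y‖^2 / s) ^ (-r))
      = σ^n * σ^(-((n:ℝ)-1)) *
        ∫ z : EuclideanSpace ℝ (Fin n), ‖z‖ ^ (-((n:ℝ)-1)) * (1 + ‖w - z‖^2) ^ (-r) := by
    have h2 := congrArg (fun y : ℝ => σ^n * y) hcomp
    rw [← mul_assoc (σ^n) ((σ^n)⁻¹), mul_inv_cancel₀ hσn.ne', one_mul] at h2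
    rw [← h2]; ring
  calc (∫ y : EuclideanSpace ℝ (Fin n), ‖y‖ ^ (-((n:ℝ)-1)) * (1 + ‖x - y‖^2 / s) ^ (-r))
      = σ * ∫ z : EuclideanSpace ℝ (Fin n), ‖z‖ ^ (-((n:ℝ)-1)) * (1 + ‖w - z‖^2) ^ (-r) := by
        rw [hIF, hσna]
    _ ≤ σ * (A * (1 + ‖w‖^2) ^ (-(((n:ℝ)-1)/2))) :=
        mul_le_mul_of_nonneg_left (hkey w) hσ.le
    _ = A * s ^ ((1:ℝ)/2) * (1 + ‖x‖^2 / s) ^ (-(((n:ℝ)-1)/2)) := by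
        rw [hw2, hσdef]; ring
end

section
/- Let $n \geq 2$, $t > 0$, and $r_1 > n/2$. Then there is a constant $C'$ depending only on $n, r_1$ such that for all $x$ with $|x|^2 > 1+t$: $\int_{\{y : |y| \geq |x|/2\}} |y|^{-n} (1 + |x-y|^2/(1+t))^{-r_1}\,dy \leq C' (1 + |x|^2/(1+t))^{-n/2}$. -/
/-!
On `‖y‖ ≥ ‖x‖ / 2` the singular factor is at most `2ⁿ ‖x‖⁻ⁿ`, and by translation and the
scaling `y ↦ √(1 + t) • y` the profile `(1 + ‖x - y‖² / (1 + t)) ^ (-r₁)` integrates over the whole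
space to `(1 + t) ^ (n / 2) ∫ (1 + ‖z‖²) ^ (-r₁)`, finite since `2 r₁ > n`. In the far field
`‖x‖² > 1 + t` one has `1 + ‖x‖² / (1 + t) ≤ 2 ‖x‖² / (1 + t)`, which turns
`((1 + t) / ‖x‖²) ^ (n / 2)` into the claimed decay.
-/

open MeasureTheory Module

lemma one_add_norm_sq_div_eq {E : Type*} [NormedAddCommGroup E] [NormedSpace ℝ E] {s : ℝ}
    (hs : 0 < s) (z : E) :
    1 + ‖z‖ ^ 2 / s = 1 + ‖(√s)⁻¹ • z‖ ^ 2 := by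
  rw [norm_smul, norm_inv, Real.norm_of_nonneg (Real.sqrt_nonneg s), mul_pow, inv_pow,
    Real.sq_sqrt hs.le, inv_mul_eq_div]

section Profile

variable {E : Type*} [NormedAddCommGroup E] [NormedSpace ℝ E] [FiniteDimensional ℝ E]
  [MeasurableSpace E] [BorelSpace E] (μ : Measure E) [μ.IsAddHaarMeasure]

lemma integrable_one_add_norm_sub_sq_div_rpow_neg {r : ℝ} (hr : (finrank ℝ E : ℝ) / 2 < r)
    {s : ℝ} (hs : 0 < s) (x : E) :
    Integrable (fun y ↦ (1 + ‖x - y‖ ^ 2 / s) ^ (-r)) μ := by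
  have h : Integrable (fun z : E ↦ (1 + ‖z‖ ^ 2) ^ (-r)) μ := by
    convert integrable_rpow_neg_one_add_norm_sq (μ := μ) (r := 2 * r) (by linarith) using 3
    ring
  simp only [one_add_norm_sq_div_eq hs]
  exact (integrable_comp_sub_left (fun y ↦ (1 + ‖(√s)⁻¹ • y‖ ^ 2) ^ (-r)) x).2
    ((integrable_comp_smul_iff μ (fun z ↦ (1 + ‖z‖ ^ 2) ^ (-r))
      (inv_ne_zero (Real.sqrt_pos.2 hs).ne')).2 h)

lemma integral_one_add_norm_sub_sq_div_rpow_neg (r : ℝ) {s : ℝ} (hs : 0 < s) (x : E) :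
    ∫ y, (1 + ‖x - y‖ ^ 2 / s) ^ (-r) ∂μ
      = √s ^ finrank ℝ E * ∫ z, (1 + ‖z‖ ^ 2) ^ (-r) ∂μ := by
  simp only [one_add_norm_sq_div_eq hs]
  rw [integral_sub_left_eq_self (fun y ↦ (1 + ‖(√s)⁻¹ • y‖ ^ 2) ^ (-r)) μ x,
    Measure.integral_comp_inv_smul μ (fun z ↦ (1 + ‖z‖ ^ 2) ^ (-r)),
    abs_of_nonneg (by positivity), smul_eq_mul]

end Profile

lemma setIntegral_norm_rpow_neg_mul_le {E : Type*} [NormedAddCommGroup E] [MeasurableSpace E]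
    [OpensMeasurableSpace E] (μ : Measure E) {f : E → ℝ} (hf : Integrable f μ) (hf0 : 0 ≤ f)
    {p ρ : ℝ} (hp : 0 ≤ p) (hρ : 0 < ρ) :
    ∫ y in {y | ρ ≤ ‖y‖}, ‖y‖ ^ (-p) * f y ∂μ ≤ ρ ^ (-p) * ∫ y, f y ∂μ := by
  have hS : MeasurableSet {y : E | ρ ≤ ‖y‖} := measurableSet_le measurable_const measurable_norm
  have hbound : ∀ y ∈ {y : E | ρ ≤ ‖y‖}, ‖y‖ ^ (-p) * f y ≤ ρ ^ (-p) * f y := fun y hy ↦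
    mul_le_mul_of_nonneg_right (Real.rpow_le_rpow_of_nonpos hρ hy (neg_nonpos.2 hp)) (hf0 y)
  have hint : IntegrableOn (fun y ↦ ‖y‖ ^ (-p) * f y) {y | ρ ≤ ‖y‖} μ := by
    refine (hf.const_mul (ρ ^ (-p))).integrableOn.mono'
      ((measurable_norm.pow_const _).aestronglyMeasurable.mul hf.aestronglyMeasurable).restrict ?_
    refine (ae_restrict_iff' hS).2 (Filter.Eventually.of_forall fun y hy ↦ ?_)
    rw [Real.norm_of_nonneg (mul_nonneg (by positivity) (hf0 y))]
    exact hbound y hy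
  calc ∫ y in {y | ρ ≤ ‖y‖}, ‖y‖ ^ (-p) * f y ∂μ
      ≤ ∫ y in {y | ρ ≤ ‖y‖}, ρ ^ (-p) * f y ∂μ :=
        setIntegral_mono_on hint (hf.const_mul _).integrableOn hS hbound
    _ ≤ ∫ y, ρ ^ (-p) * f y ∂μ :=
        setIntegral_le_integral (hf.const_mul _)
          (Filter.Eventually.of_forall fun y ↦ mul_nonneg (by positivity) (hf0 y))
    _ = ρ ^ (-p) * ∫ y, f y ∂μ := integral_const_mul _ _

lemma div_pow_le_two_rpow_mul_one_add_sq_div_rpow (d : ℕ) {R ρ : ℝ} (hR : 0 < R) (hRρ : R ≤ ρ) :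
    (R / ρ) ^ d ≤ 2 ^ ((d : ℝ) / 2) * (1 + ρ ^ 2 / R ^ 2) ^ (-(d : ℝ) / 2) := by
  have hρ : 0 < ρ := hR.trans_le hRρ
  have hle : 1 + ρ ^ 2 / R ^ 2 ≤ 2 * (ρ / R) ^ 2 := by
    rw [div_pow, two_mul, add_le_add_iff_right, one_le_div (by positivity)]
    exact pow_le_pow_left₀ hR.le hRρ 2
  calc (R / ρ) ^ d
      = 2 ^ ((d : ℝ) / 2) * (2 * (ρ / R) ^ 2) ^ (-(d : ℝ) / 2) := by
        rw [Real.mul_rpow zero_le_two (by positivity), ← mul_assoc, ← Real.rpow_add two_pos,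
          neg_div, add_neg_cancel, Real.rpow_zero, one_mul, ← Real.rpow_natCast (ρ / R) 2,
          ← Real.rpow_mul (by positivity), show ((2 : ℕ) : ℝ) * -((d : ℝ) / 2) = -d by push_cast; ring, Real.rpow_neg
          (by positivity), Real.rpow_natCast, ← inv_pow, inv_div]
    _ ≤ 2 ^ ((d : ℝ) / 2) * (1 + ρ ^ 2 / R ^ 2) ^ (-(d : ℝ) / 2) :=
        mul_le_mul_of_nonneg_left (Real.rpow_le_rpow_of_nonpos (by positivity) hle
          (by rw [neg_div, neg_nonpos]; positivity)) (by positivity)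

theorem stmt_1_general (n : ℕ) (r₁ : ℝ) (hr₁ : r₁ > (n : ℝ) / 2) :
    ∃ C' > 0, ∀ (t : ℝ), 0 < t → ∀ x : EuclideanSpace ℝ (Fin n),
      ‖x‖ ^ 2 > 1 + t →
      (∫ y in {y : EuclideanSpace ℝ (Fin n) | ‖x‖ / 2 ≤ ‖y‖},
          ‖y‖ ^ (-(n : ℝ)) * (1 + ‖x - y‖ ^ 2 / (1 + t)) ^ (-r₁))
        ≤ C' * (1 + ‖x‖ ^ 2 / (1 + t)) ^ (-(n : ℝ) / 2) := by
  obtain ⟨I, hI_eq⟩ : ∃ I, ∫ z : EuclideanSpace ℝ (Fin n), (1 + ‖z‖ ^ 2) ^ (-r₁) = I := ⟨_, rfl⟩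
  have hI : 0 ≤ I := hI_eq ▸ integral_nonneg fun z ↦ by positivity
  refine ⟨2 ^ n * 2 ^ ((n : ℝ) / 2) * (I + 1), by positivity, fun t ht x hx ↦ ?_⟩
  have hs : 0 < 1 + t := by linarith
  have hsx : √(1 + t) ≤ ‖x‖ :=
    (Real.sqrt_le_sqrt hx.le).trans_eq (Real.sqrt_sq (norm_nonneg x))
  have hx0 : 0 < ‖x‖ := (Real.sqrt_pos.2 hs).trans_le hsx
  have hr : (finrank ℝ (EuclideanSpace ℝ (Fin n)) : ℝ) / 2 < r₁ := by
    rwa [finrank_euclideanSpace_fin]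
  have hdecay := div_pow_le_two_rpow_mul_one_add_sq_div_rpow n (Real.sqrt_pos.2 hs) hsx
  rw [Real.sq_sqrt hs.le] at hdecay
  calc _ ≤ (‖x‖ / 2) ^ (-(n : ℝ)) * ∫ y, (1 + ‖x - y‖ ^ 2 / (1 + t)) ^ (-r₁) :=
        setIntegral_norm_rpow_neg_mul_le volume
          (integrable_one_add_norm_sub_sq_div_rpow_neg volume hr hs x) (fun y ↦ by positivity)
          n.cast_nonneg (by positivity)
    _ = 2 ^ n * (√(1 + t) / ‖x‖) ^ n * I := by
        rw [integral_one_add_norm_sub_sq_div_rpow_neg volume r₁ hs x, finrank_euclideanSpace_fin,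
          hI_eq, Real.rpow_neg (by positivity), Real.rpow_natCast, div_pow, div_pow]
        field_simp
    _ ≤ 2 ^ n * (2 ^ ((n : ℝ) / 2) * (1 + ‖x‖ ^ 2 / (1 + t)) ^ (-(n : ℝ) / 2)) * I := by
        gcongr
    _ = 2 ^ n * 2 ^ ((n : ℝ) / 2) * I * (1 + ‖x‖ ^ 2 / (1 + t)) ^ (-(n : ℝ) / 2) := by ring
    _ ≤ _ := by gcongr; linarith

theorem stmt_1 (n : ℕ) (hn : 2 ≤ n) (r₁ : ℝ) (hr₁ : r₁ > (n : ℝ) / 2) :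
    ∃ C' > 0, ∀ (t : ℝ), 0 < t → ∀ x : EuclideanSpace ℝ (Fin n),
      ‖x‖ ^ 2 > 1 + t →
      (∫ y in {y : EuclideanSpace ℝ (Fin n) | ‖x‖ / 2 ≤ ‖y‖},
          ‖y‖ ^ (-(n : ℝ)) * (1 + ‖x - y‖ ^ 2 / (1 + t)) ^ (-r₁))
        ≤ C' * (1 + ‖x‖ ^ 2 / (1 + t)) ^ (-(n : ℝ) / 2) :=
  stmt_1_general n r₁ hr₁
end

section
/- There exists a constant $C > 0$ such that for all $t > 0$ and $x \in \mathbb{R}^3$: $\int_0^t \int_{\mathbb{R}^3} (1+t-s)^{-2}\big(1+\tfrac{|x-y|^2}{1+t-s}\big)^{-2}(1+s)^{-3}\big(1+\tfrac{|y|^2}{1+s}\big)^{-3}\,dy\,ds \leq C(1+t)^{-2}\big(1+\tfrac{|x|^2}{1+t}\big)^{-3/2}$. -/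
/-!
Since `τ ^ (-p) * (1 + |z|² / τ) ^ (-p) = (τ + |z|²) ^ (-p)`, the spatial integrand is
`(a + |x - y|²) ^ (-2) * (b + |y|²) ^ (-3)` with `a = 1 + t - s`, `b = 1 + s`. As
`|x|² ≤ 2 (|x - y|² + |y|²)`, one of the two brackets is at least `(a + b + |x|²) / 4`; spending a
power `3/2` of that bracket and integrating the other one by scaling
(`∫ (c + |y|²) ^ (-p) dy = c ^ (3/2 - p) * const`) bounds the inner integral by
`(1 + t + |x|²) ^ (-3/2) (1 + t - s) ^ (-1/2) (1 + s) ^ (-3/2)`. Splitting the time integral at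
`s = t / 2` bounds `∫₀ᵗ (1 + t - s) ^ (-1/2) (1 + s) ^ (-3/2) ds` by a multiple of
`(1 + t) ^ (-1/2)`, and `(1 + t) ^ (-1/2) (1 + t + |x|²) ^ (-3/2)` is the right-hand side.
-/

open MeasureTheory Module Real Set

lemma rpow_mul_one_add_div_rpow {a r : ℝ} (ha : 0 < a) (hr : 0 ≤ r) (q : ℝ) :
    a ^ q * (1 + r / a) ^ q = (a + r) ^ q := by
  rw [← mul_rpow ha.le (by positivity), mul_one_add, mul_div_cancel₀ _ ha.ne']

lemma rpow_neg_le_rpow_neg_mul_rpow {a c u p r : ℝ} (ha : 0 < a) (hc : 0 < c)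
    (hau : a ≤ u) (hcu : c ≤ u) (hr : 0 ≤ r) (hrp : r ≤ p) :
    u ^ (-p) ≤ c ^ (-r) * a ^ (r - p) := by
  have hu : 0 < u := ha.trans_le hau
  calc u ^ (-p) = u ^ (-r) * u ^ (r - p) := by rw [← rpow_add hu]; ring_nf
    _ ≤ c ^ (-r) * a ^ (r - p) :=
      mul_le_mul (rpow_le_rpow_of_nonpos hc hcu (by linarith))
        (rpow_le_rpow_of_nonpos ha hau (by linarith)) (by positivity) (by positivity)

lemma rpow_neg_le_of_div_le {c k u γ : ℝ} (hc : 0 < c) (hk : 0 < k) (hcu : c / k ≤ u)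
    (hγ : 0 ≤ γ) : u ^ (-γ) ≤ k ^ γ * c ^ (-γ) :=
  calc u ^ (-γ) ≤ (c / k) ^ (-γ) := rpow_le_rpow_of_nonpos (by positivity) hcu (by linarith)
    _ = k ^ γ * c ^ (-γ) := by
      rw [div_rpow hc.le hk.le, rpow_neg hk.le, div_inv_eq_mul, mul_comm]

lemma rpow_neg_mul_rpow_neg_le {a b u v A p q r : ℝ} (ha : 0 < a) (hb : 0 < b)
    (hau : a ≤ u) (hbv : b ≤ v) (hA : 0 < A) (hAuv : A ≤ 2 * (u + v))
    (hr : 0 ≤ r) (hrp : r ≤ p) (hrq : r ≤ q) :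
    u ^ (-p) * v ^ (-q) ≤ (A / 4) ^ (-r) * (a ^ (r - p) * v ^ (-q) + b ^ (r - q) * u ^ (-p)) := by
  have hu : 0 < u := ha.trans_le hau
  have hv : 0 < v := hb.trans_le hbv
  rcases le_total (A / 4) u with hAu | hAv
  · have := rpow_neg_le_rpow_neg_mul_rpow ha (by positivity) hau hAu hr hrp
    calc u ^ (-p) * v ^ (-q) ≤ (A / 4) ^ (-r) * a ^ (r - p) * v ^ (-q) := by gcongr
      _ ≤ _ := by rw [mul_assoc, mul_add]; exact le_add_of_nonneg_right (by positivity)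
  · have hAv : A / 4 ≤ v := by linarith
    have := rpow_neg_le_rpow_neg_mul_rpow hb (by positivity) hbv hAv hr hrq
    calc u ^ (-p) * v ^ (-q) ≤ (A / 4) ^ (-r) * b ^ (r - q) * u ^ (-p) := by
          rw [mul_comm]; gcongr
      _ ≤ _ := by rw [mul_assoc, mul_add]; exact le_add_of_nonneg_left (by positivity)

lemma add_norm_sqrt_smul_sq_rpow {E : Type*} [NormedAddCommGroup E] [NormedSpace ℝ E] {c : ℝ}
    (hc : 0 < c) (q : ℝ) (z : E) :
    (c + ‖√c • z‖ ^ 2) ^ q = c ^ q * (1 + ‖z‖ ^ 2) ^ q := by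
  rw [norm_smul, mul_pow, norm_of_nonneg (sqrt_nonneg c), sq_sqrt hc.le,
    ← mul_rpow hc.le (by positivity), mul_one_add]

section AddHaar

variable {E : Type*} [NormedAddCommGroup E] [NormedSpace ℝ E] [FiniteDimensional ℝ E]
  [MeasurableSpace E] [BorelSpace E] (μ : Measure E) [μ.IsAddHaarMeasure]

lemma integrable_add_norm_sq_rpow_neg {c p : ℝ} (hc : 0 < c) (hp : (finrank ℝ E : ℝ) < 2 * p) :
    Integrable (fun y : E ↦ (c + ‖y‖ ^ 2) ^ (-p)) μ := by
  have h := (integrable_rpow_neg_one_add_norm_sq (μ := μ) hp).const_mul (c ^ (-p))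
  rw [neg_div, mul_div_cancel_left₀ _ two_ne_zero] at h
  refine (integrable_comp_smul_iff μ (fun y : E ↦ (c + ‖y‖ ^ 2) ^ (-p))
    (sqrt_pos.2 hc).ne').1 ?_
  simpa only [add_norm_sqrt_smul_sq_rpow hc] using h

lemma integral_add_norm_sq_rpow_neg {c : ℝ} (hc : 0 < c) (p : ℝ) :
    ∫ y : E, (c + ‖y‖ ^ 2) ^ (-p) ∂μ
      = c ^ ((finrank ℝ E : ℝ) / 2 - p) * ∫ z : E, (1 + ‖z‖ ^ 2) ^ (-p) ∂μ := by
  have h := Measure.integral_comp_smul_of_nonneg μ (fun y : E ↦ (c + ‖y‖ ^ 2) ^ (-p)) (√c)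
    (hR := sqrt_nonneg c)
  simp only [add_norm_sqrt_smul_sq_rpow hc, integral_const_mul, smul_eq_mul] at h
  have hpow : √c ^ finrank ℝ E = c ^ ((finrank ℝ E : ℝ) / 2) := by
    rw [sqrt_eq_rpow, ← rpow_natCast, ← rpow_mul hc.le]; ring_nf
  rw [hpow] at h
  rw [sub_eq_add_neg, rpow_add hc, mul_assoc, h, ← mul_assoc,
    mul_inv_cancel₀ (rpow_pos_of_pos hc _).ne', one_mul]

lemma integral_add_norm_sub_sq_rpow_neg_mul_le {a b p q : ℝ} (x : E) (ha : 0 < a) (hb : 0 < b)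
    (hp : (finrank ℝ E : ℝ) < 2 * p) (hq : (finrank ℝ E : ℝ) < 2 * q) :
    ∫ y : E, (a + ‖x - y‖ ^ 2) ^ (-p) * (b + ‖y‖ ^ 2) ^ (-q) ∂μ
      ≤ ((a + b + ‖x‖ ^ 2) / 4) ^ (-((finrank ℝ E : ℝ) / 2))
        * (a ^ ((finrank ℝ E : ℝ) / 2 - p) * b ^ ((finrank ℝ E : ℝ) / 2 - q))
        * (∫ z : E, (1 + ‖z‖ ^ 2) ^ (-p) ∂μ + ∫ z : E, (1 + ‖z‖ ^ 2) ^ (-q) ∂μ) := by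
  set r : ℝ := (finrank ℝ E : ℝ) / 2
  have hr : 0 ≤ r := by positivity
  have hrp : r ≤ p := by simp only [r]; linarith
  have hrq : r ≤ q := by simp only [r]; linarith
  have hA : 0 < a + b + ‖x‖ ^ 2 := by positivity
  have hsub : ∀ y : E, (a + ‖x - y‖ ^ 2) ^ (-p) = (a + ‖y - x‖ ^ 2) ^ (-p) := fun y ↦ by
    rw [norm_sub_rev]
  have hint_p : Integrable (fun y : E ↦ (a + ‖x - y‖ ^ 2) ^ (-p)) μ := by
    simpa only [hsub] using (integrable_add_norm_sq_rpow_neg μ ha hp).comp_sub_right x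
  have hint_q := integrable_add_norm_sq_rpow_neg μ hb hq
  have hpointwise : ∀ y : E, (a + ‖x - y‖ ^ 2) ^ (-p) * (b + ‖y‖ ^ 2) ^ (-q)
      ≤ ((a + b + ‖x‖ ^ 2) / 4) ^ (-r)
        * (a ^ (r - p) * (b + ‖y‖ ^ 2) ^ (-q) + b ^ (r - q) * (a + ‖x - y‖ ^ 2) ^ (-p)) := by
    intro y
    have hx : ‖x‖ ^ 2 ≤ 2 * (‖x - y‖ ^ 2 + ‖y‖ ^ 2) :=
      calc ‖x‖ ^ 2 ≤ (‖x - y‖ + ‖y‖) ^ 2 := by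
            gcongr; simpa using norm_add_le (x - y) y
        _ ≤ _ := add_sq_le
    refine rpow_neg_mul_rpow_neg_le ha hb (by nlinarith) (by nlinarith) hA (by nlinarith) hr hrp hrq
  calc ∫ y : E, (a + ‖x - y‖ ^ 2) ^ (-p) * (b + ‖y‖ ^ 2) ^ (-q) ∂μ
      ≤ ∫ y : E, ((a + b + ‖x‖ ^ 2) / 4) ^ (-r)
          * (a ^ (r - p) * (b + ‖y‖ ^ 2) ^ (-q) + b ^ (r - q) * (a + ‖x - y‖ ^ 2) ^ (-p)) ∂μ :=
        integral_mono_of_nonneg (.of_forall fun y ↦ by positivity)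
          (((hint_q.const_mul _).add (hint_p.const_mul _)).const_mul _) (.of_forall hpointwise)
    _ = _ := by
      rw [integral_const_mul, integral_add (hint_q.const_mul _) (hint_p.const_mul _),
        integral_const_mul, integral_const_mul, integral_congr_ae (.of_forall hsub),
        integral_sub_right_eq_self (fun y : E ↦ (a + ‖y‖ ^ 2) ^ (-p)) x,
        integral_add_norm_sq_rpow_neg μ ha, integral_add_norm_sq_rpow_neg μ hb]
      ring

end AddHaar

lemma intervalIntegral_mono_of_nonneg_on {f g : ℝ → ℝ} {a b : ℝ} (hab : a ≤ b)
    (hg : IntervalIntegrable g volume a b) (hf : ∀ x ∈ Ioc a b, 0 ≤ f x)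
    (hfg : ∀ x ∈ Ioc a b, f x ≤ g x) :
    ∫ x in a..b, f x ≤ ∫ x in a..b, g x := by
  rw [intervalIntegral.integral_of_le hab, intervalIntegral.integral_of_le hab]
  exact integral_mono_of_nonneg (ae_restrict_of_forall_mem measurableSet_Ioc hf) hg.1
    (ae_restrict_of_forall_mem measurableSet_Ioc hfg)

lemma integral_rpow_from_one {γ t : ℝ} (hγ : γ ≠ -1) (ht : 0 ≤ t) :
    ∫ u in (1 : ℝ)..1 + t, u ^ γ = ((1 + t) ^ (γ + 1) - 1) / (γ + 1) := by
  rw [integral_rpow (Or.inr ⟨hγ, by rw [uIcc_of_le (by linarith)]; simp⟩), one_rpow]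

lemma integral_one_add_rpow_neg_le {β t : ℝ} (hβ : 1 < β) (ht : 0 ≤ t) :
    ∫ s in (0 : ℝ)..t, (1 + s) ^ (-β) ≤ 1 / (β - 1) := by
  rw [intervalIntegral.integral_comp_add_left (fun u ↦ u ^ (-β)), add_zero,
    integral_rpow_from_one (by linarith) ht, show -β + 1 = -(β - 1) by ring, div_neg, ← neg_div,
    neg_sub]
  have : 0 ≤ (1 + t) ^ (-(β - 1)) := by positivity
  gcongr
  linarith

lemma integral_one_add_sub_rpow_neg_le {α t : ℝ} (hα : α < 1) (ht : 0 ≤ t) :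
    ∫ s in (0 : ℝ)..t, (1 + t - s) ^ (-α) ≤ (1 + t) ^ (1 - α) / (1 - α) := by
  rw [intervalIntegral.integral_comp_sub_left (fun u ↦ u ^ (-α)), sub_zero, add_sub_cancel_right,
    integral_rpow_from_one (by linarith) ht, neg_add_eq_sub]
  gcongr
  linarith

lemma continuousOn_one_add_rpow {t : ℝ} (ht : 0 ≤ t) (γ : ℝ) :
    ContinuousOn (fun s : ℝ ↦ (1 + s) ^ γ) (uIcc 0 t) := by
  refine ContinuousOn.rpow_const (by fun_prop) fun s hs ↦ .inl ?_
  rw [uIcc_of_le ht] at hs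
  linarith [hs.1]

lemma continuousOn_one_add_sub_rpow {t : ℝ} (ht : 0 ≤ t) (γ : ℝ) :
    ContinuousOn (fun s : ℝ ↦ (1 + t - s) ^ γ) (uIcc 0 t) := by
  refine ContinuousOn.rpow_const (by fun_prop) fun s hs ↦ .inl ?_
  rw [uIcc_of_le ht] at hs
  linarith [hs.2]

lemma integral_sub_rpow_neg_mul_rpow_neg_le {α β t : ℝ} (hα₀ : 0 ≤ α) (hα₁ : α < 1) (hβ : 1 < β)
    (ht : 0 ≤ t) :
    ∫ s in (0 : ℝ)..t, (1 + t - s) ^ (-α) * (1 + s) ^ (-β)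
      ≤ (2 ^ α / (β - 1) + 2 ^ β / (1 - α)) * (1 + t) ^ (-α) := by
  have h1t : 0 < 1 + t := by linarith
  have hint_β := (continuousOn_one_add_rpow ht (-β)).intervalIntegrable (μ := volume)
  have hint_α := (continuousOn_one_add_sub_rpow ht (-α)).intervalIntegrable (μ := volume)
  have hsplit : ∀ s ∈ Ioc 0 t, (1 + t - s) ^ (-α) * (1 + s) ^ (-β)
      ≤ 2 ^ α * (1 + t) ^ (-α) * (1 + s) ^ (-β) + 2 ^ β * (1 + t) ^ (-β) * (1 + t - s) ^ (-α) := by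
    intro s ⟨hs₀, hst⟩
    have : 0 ≤ (1 + t - s) ^ (-α) := rpow_nonneg (by linarith) _
    rcases le_total s (t / 2) with hs | hs
    · have := rpow_neg_le_of_div_le h1t two_pos (show (1 + t) / 2 ≤ 1 + t - s by linarith) hα₀
      exact le_add_of_le_of_nonneg (by gcongr) (by positivity)
    · have := rpow_neg_le_of_div_le h1t two_pos (show (1 + t) / 2 ≤ 1 + s by linarith)
        (γ := β) (by linarith)
      rw [mul_comm]
      exact le_add_of_nonneg_of_le (by positivity) (by gcongr)
  have hdecay : (1 + t) ^ (-β) * (1 + t) ^ (1 - α) ≤ (1 + t) ^ (-α) := by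
    rw [← rpow_add h1t]
    exact rpow_le_rpow_of_exponent_le (by linarith) (by linarith)
  calc ∫ s in (0 : ℝ)..t, (1 + t - s) ^ (-α) * (1 + s) ^ (-β)
      ≤ ∫ s in (0 : ℝ)..t,
          2 ^ α * (1 + t) ^ (-α) * (1 + s) ^ (-β) + 2 ^ β * (1 + t) ^ (-β) * (1 + t - s) ^ (-α) :=
        intervalIntegral_mono_of_nonneg_on ht ((hint_β.const_mul _).add (hint_α.const_mul _))
          (fun s hs ↦ mul_nonneg (rpow_nonneg (by linarith [hs.2]) _)
            (rpow_nonneg (by linarith [hs.1]) _)) hsplit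
    _ = 2 ^ α * (1 + t) ^ (-α) * (∫ s in (0 : ℝ)..t, (1 + s) ^ (-β))
          + 2 ^ β * (1 + t) ^ (-β) * ∫ s in (0 : ℝ)..t, (1 + t - s) ^ (-α) := by
        rw [intervalIntegral.integral_add (hint_β.const_mul _) (hint_α.const_mul _),
          intervalIntegral.integral_const_mul, intervalIntegral.integral_const_mul]
    _ ≤ 2 ^ α * (1 + t) ^ (-α) * (1 / (β - 1))
          + 2 ^ β * (1 + t) ^ (-β) * ((1 + t) ^ (1 - α) / (1 - α)) := by
        gcongr
        · exact integral_one_add_rpow_neg_le hβ ht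
        · exact integral_one_add_sub_rpow_neg_le hα₁ ht
    _ = 2 ^ α / (β - 1) * (1 + t) ^ (-α)
          + 2 ^ β / (1 - α) * ((1 + t) ^ (-β) * (1 + t) ^ (1 - α)) := by ring
    _ ≤ _ := by
        have : 0 < 1 - α := by linarith
        rw [add_mul]
        gcongr

lemma exists_integral_diffusionWave_mul_le :
    ∃ M ≥ 0, ∀ t s : ℝ, 0 ≤ s → s ≤ t → ∀ x : EuclideanSpace ℝ (Fin 3),
      ∫ y : EuclideanSpace ℝ (Fin 3),
          (1 + t - s) ^ (-(2 : ℝ)) * (1 + ‖x - y‖ ^ 2 / (1 + t - s)) ^ (-(2 : ℝ)) *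
            (1 + s) ^ (-(3 : ℝ)) * (1 + ‖y‖ ^ 2 / (1 + s)) ^ (-(3 : ℝ))
        ≤ M * (1 + t + ‖x‖ ^ 2) ^ (-(3 / 2 : ℝ))
          * ((1 + t - s) ^ (-(1 / 2 : ℝ)) * (1 + s) ^ (-(3 / 2 : ℝ))) := by
  set K : ℝ := (∫ z : EuclideanSpace ℝ (Fin 3), (1 + ‖z‖ ^ 2) ^ (-(2 : ℝ)))
    + ∫ z : EuclideanSpace ℝ (Fin 3), (1 + ‖z‖ ^ 2) ^ (-(3 : ℝ))
  have hK : 0 ≤ K := by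
    refine add_nonneg (integral_nonneg fun _ ↦ ?_) (integral_nonneg fun _ ↦ ?_) <;> positivity
  refine ⟨4 ^ (3 / 2 : ℝ) * K, by positivity, fun t s hs hst x ↦ ?_⟩
  have ha : 0 < 1 + t - s := by linarith
  have hb : 0 < 1 + s := by linarith
  have hintegrand : ∀ y : EuclideanSpace ℝ (Fin 3),
      (1 + t - s) ^ (-(2 : ℝ)) * (1 + ‖x - y‖ ^ 2 / (1 + t - s)) ^ (-(2 : ℝ)) *
        (1 + s) ^ (-(3 : ℝ)) * (1 + ‖y‖ ^ 2 / (1 + s)) ^ (-(3 : ℝ))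
      = (1 + t - s + ‖x - y‖ ^ 2) ^ (-(2 : ℝ)) * (1 + s + ‖y‖ ^ 2) ^ (-(3 : ℝ)) := fun y ↦ by
    rw [← rpow_mul_one_add_div_rpow ha (sq_nonneg _),
      ← rpow_mul_one_add_div_rpow hb (sq_nonneg _)]
    ring
  have hconv := integral_add_norm_sub_sq_rpow_neg_mul_le volume x ha hb
    (p := 2) (q := 3) (by norm_num) (by norm_num)
  rw [finrank_euclideanSpace_fin, Nat.cast_ofNat, show (3 : ℝ) / 2 - 2 = -(1 / 2) by norm_num,
    show (3 : ℝ) / 2 - 3 = -(3 / 2) by norm_num] at hconv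
  have hA : ((1 + t - s + (1 + s) + ‖x‖ ^ 2) / 4) ^ (-(3 / 2 : ℝ))
      ≤ 4 ^ (3 / 2 : ℝ) * (1 + t + ‖x‖ ^ 2) ^ (-(3 / 2 : ℝ)) :=
    rpow_neg_le_of_div_le (by linarith [sq_nonneg ‖x‖]) four_pos (by linarith) (by norm_num)
  simp only [hintegrand]
  calc _ ≤ _ := hconv
    _ ≤ 4 ^ (3 / 2 : ℝ) * (1 + t + ‖x‖ ^ 2) ^ (-(3 / 2 : ℝ))
        * ((1 + t - s) ^ (-(1 / 2 : ℝ)) * (1 + s) ^ (-(3 / 2 : ℝ))) * K := by gcongr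
    _ = _ := by ring

theorem stmt_8 :
    ∃ C > 0, ∀ (t : ℝ), 0 < t → ∀ x : EuclideanSpace ℝ (Fin 3),
      (∫ s in (0 : ℝ)..t, ∫ y : EuclideanSpace ℝ (Fin 3),
          (1 + t - s) ^ (-(2 : ℝ)) * (1 + ‖x - y‖ ^ 2 / (1 + t - s)) ^ (-(2 : ℝ)) *
            (1 + s) ^ (-(3 : ℝ)) * (1 + ‖y‖ ^ 2 / (1 + s)) ^ (-(3 : ℝ)))
        ≤ C * (1 + t) ^ (-(2 : ℝ)) * (1 + ‖x‖ ^ 2 / (1 + t)) ^ (-(3 : ℝ) / 2) := by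
  obtain ⟨M, hM, hspace⟩ := exists_integral_diffusionWave_mul_le
  set T : ℝ := 2 ^ (1 / 2 : ℝ) / (3 / 2 - 1) + 2 ^ (3 / 2 : ℝ) / (1 - 1 / 2)
  have hT : 0 ≤ T := by norm_num [T]; positivity
  refine ⟨M * T + 1, by positivity, fun t ht x ↦ ?_⟩
  set B := (1 + t) ^ (-(1 / 2 : ℝ)) * (1 + t + ‖x‖ ^ 2) ^ (-(3 / 2 : ℝ))
  have hB : (1 + t) ^ (-(2 : ℝ)) * (1 + ‖x‖ ^ 2 / (1 + t)) ^ (-(3 : ℝ) / 2) = B := by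
    rw [show -(2 : ℝ) = -(1 / 2) + -(3 / 2) by norm_num, show -(3 : ℝ) / 2 = -(3 / 2) by norm_num,
      rpow_add (by linarith), mul_assoc, rpow_mul_one_add_div_rpow (by linarith) (sq_nonneg _)]
  have hB0 : 0 ≤ B := by positivity
  calc _ ≤ ∫ s in (0 : ℝ)..t, M * (1 + t + ‖x‖ ^ 2) ^ (-(3 / 2 : ℝ))
          * ((1 + t - s) ^ (-(1 / 2 : ℝ)) * (1 + s) ^ (-(3 / 2 : ℝ))) :=
        intervalIntegral_mono_of_nonneg_on ht.le
          (((continuousOn_one_add_sub_rpow ht.le _).mul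
            (continuousOn_one_add_rpow ht.le _)).intervalIntegrable.const_mul _)
          (fun s hs ↦ integral_nonneg fun y ↦ by
            have : 0 < 1 + t - s := by linarith [hs.2]
            have : 0 < 1 + s := by linarith [hs.1]
            positivity)
          (fun s hs ↦ hspace t s hs.1.le hs.2 x)
    _ ≤ M * (1 + t + ‖x‖ ^ 2) ^ (-(3 / 2 : ℝ)) * (T * (1 + t) ^ (-(1 / 2 : ℝ))) := by
        rw [intervalIntegral.integral_const_mul]
        gcongr
        exact integral_sub_rpow_neg_mul_rpow_neg_le (by norm_num) (by norm_num) (by norm_num) ht.le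
    _ = M * T * B := by ring
    _ ≤ (M * T + 1) * B := by gcongr; linarith
    _ = _ := by rw [← hB]; ring
end

section
/- There exists $C > 0$ such that for all $t \geq 0$ and $x \in \mathbb{R}^3$: $\int_0^t e^{-(t-s)} (1+s)^{-4}\big(1+\tfrac{(|x|-cs)^2}{1+s}\big)^{-3}\,ds \leq C(1+t)^{-2}\big(1+\tfrac{|x|^2}{1+t}\big)^{-r}$ for any fixed $r$ with $3/2 < r \leq 2$ and fixed $c > 0$. -/
/-!
For `0 ≤ s ≤ t`, the inequality `R² ≤ 2(R - cs)² + 2c²s²` turns the Huygens factor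
`1 + (R - cs)²/(1 + s)` into the diffusive factor `1 + R²/(1 + t)` at the cost of
`2(1 + c²)(1 + t)`; as `0 ≤ r ≤ 2 < 3`, after raising to the powers this costs at most
`(1 + t)²`. Half of the decay `e^{-(t-s)}` pays for the polynomial loss in time, because
`(1 + t)⁴ ≤ (1 + s)⁴ (1 + (t - s))⁴ ≲ (1 + s)⁴ e^{(t-s)/2}`. The integrand is thus bounded by
a constant times `(1 + t)⁻² (1 + R²/(1 + t))^{-r} e^{-(t-s)/2}`, and `∫₀ᵗ e^{-(t-s)/2} ds ≤ 2`.
-/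

open MeasureTheory Real

lemma one_add_pow_le_mul_exp_half {u : ℝ} (hu : 0 ≤ u) (n : ℕ) :
    (1 + u) ^ n ≤ (2 * n) ^ n * exp (u / 2) := by
  rcases Nat.eq_zero_or_pos n with rfl | hn
  · simpa using one_le_exp (by linarith : 0 ≤ u / 2)
  have hn' : (1 : ℝ) ≤ n := by exact_mod_cast hn
  have hbase : 1 + u ≤ 2 * n * exp (u / (2 * n)) := by
    calc 1 + u ≤ 2 * n * (u / (2 * n) + 1) := by
          rw [mul_add, mul_div_cancel₀ _ (by positivity)]; linarith
      _ ≤ 2 * n * exp (u / (2 * n)) := by gcongr; exact add_one_le_exp _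
  calc (1 + u) ^ n ≤ (2 * n * exp (u / (2 * n))) ^ n := by gcongr
    _ = (2 * n) ^ n * exp (u / 2) := by
      rw [mul_pow, ← exp_nat_mul]; congr 2; field_simp

lemma one_add_pow_le_mul_exp_mul_one_add_pow {s t : ℝ} (hs : 0 ≤ s) (hst : s ≤ t) (n : ℕ) :
    (1 + t) ^ n ≤ (2 * n) ^ n * exp ((t - s) / 2) * (1 + s) ^ n := by
  have hsplit : 1 + t ≤ (1 + s) * (1 + (t - s)) := by nlinarith
  calc (1 + t) ^ n ≤ ((1 + s) * (1 + (t - s))) ^ n := by gcongr; linarith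
    _ = (1 + s) ^ n * (1 + (t - s)) ^ n := mul_pow _ _ _
    _ ≤ (1 + s) ^ n * ((2 * n) ^ n * exp ((t - s) / 2)) := by
      gcongr; exact one_add_pow_le_mul_exp_half (by linarith) n
    _ = _ := by ring

lemma one_add_sq_div_le_mul_one_add_sub_sq_div (c R : ℝ) {s : ℝ} (hs : 0 ≤ s) :
    1 + R ^ 2 / (1 + s) ≤ 2 * (1 + c ^ 2) * (1 + s) * (1 + (R - c * s) ^ 2 / (1 + s)) := by
  have hS : 0 < 1 + s := by linarith
  calc 1 + R ^ 2 / (1 + s) ≤ 1 + (2 * (R - c * s) ^ 2 + 2 * c ^ 2 * s ^ 2) / (1 + s) := by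
        gcongr; nlinarith [sq_nonneg (R - 2 * c * s)]
    _ ≤ 2 * (1 + c ^ 2) * ((1 + s) + (R - c * s) ^ 2) := by
        rw [← le_sub_iff_add_le', div_le_iff₀ hS]
        have hX := sq_nonneg (R - c * s)
        nlinarith [mul_nonneg hX hs, mul_nonneg (sq_nonneg c) hs,
          mul_nonneg (mul_nonneg hX hs) (sq_nonneg c), mul_nonneg (sq_nonneg c) hX]
    _ = 2 * (1 + c ^ 2) * (1 + s) * (1 + (R - c * s) ^ 2 / (1 + s)) := by
        field_simp

lemma rpow_neg_le_rpow_mul_rpow_neg {A P L p q r : ℝ} (hA : 1 ≤ A) (hP : 0 < P) (hL : 1 ≤ L)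
    (hPA : P ≤ L * A) (hr : 0 ≤ r) (hrp : r ≤ p) (hrq : r ≤ q) :
    A ^ (-p) ≤ L ^ q * P ^ (-r) := by
  have hA0 : 0 < A := by linarith
  calc A ^ (-p) ≤ A ^ (-r) := rpow_le_rpow_of_exponent_le hA (by linarith)
    _ = (A⁻¹) ^ r := by rw [rpow_neg hA0.le, inv_rpow hA0.le]
    _ ≤ (L * P⁻¹) ^ r := by
      gcongr
      rw [inv_le_iff_one_le_mul₀ hA0]
      calc 1 = P * P⁻¹ := (mul_inv_cancel₀ hP.ne').symm
        _ ≤ L * A * P⁻¹ := by gcongr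
        _ = _ := by ring
    _ = L ^ r * P ^ (-r) := by
      rw [mul_rpow (by linarith) (by positivity), inv_rpow hP.le, rpow_neg hP.le]
    _ ≤ L ^ q * P ^ (-r) := by gcongr

lemma integral_exp_sub_div_two_le (a b : ℝ) : ∫ s in a..b, exp ((s - b) / 2) ≤ 2 := by
  simp_rw [sub_div]
  rw [intervalIntegral.integral_comp_div_sub (fun x => exp x) two_ne_zero, integral_exp, sub_self,
    exp_zero, smul_eq_mul]
  nlinarith [exp_pos (a / 2 - b / 2)]

lemma exp_mul_one_add_rpow_neg_four_le {s t : ℝ} (hs : 0 ≤ s) (hst : s ≤ t) :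
    exp (-(t - s)) * (1 + s) ^ (-(4 : ℝ)) * (1 + t) ^ 2
      ≤ 8 ^ 4 * (1 + t) ^ (-(2 : ℝ)) * exp ((s - t) / 2) := by
  have ht : 0 ≤ t := hs.trans hst
  have key : exp ((s - t) / 2) * (1 + t) ^ 4 ≤ 8 ^ 4 * (1 + s) ^ 4 :=
    calc exp ((s - t) / 2) * (1 + t) ^ 4
        ≤ exp ((s - t) / 2) * ((2 * 4) ^ 4 * exp ((t - s) / 2) * (1 + s) ^ 4) := by
          gcongr; exact_mod_cast one_add_pow_le_mul_exp_mul_one_add_pow hs hst 4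
      _ = 8 ^ 4 * (1 + s) ^ 4 * exp ((s - t) / 2 + (t - s) / 2) := by rw [exp_add]; ring
      _ = 8 ^ 4 * (1 + s) ^ 4 := by
        rw [show (s - t) / 2 + (t - s) / 2 = 0 by ring, exp_zero, mul_one]
  have hexp : exp (-(t - s)) = exp ((s - t) / 2) * exp ((s - t) / 2) := by
    rw [← exp_add]; ring_nf
  rw [hexp, rpow_neg (by positivity), rpow_neg (by positivity)]
  norm_num
  field_simp
  linear_combination key

lemma exp_mul_rpow_mul_rpow_le_mul_exp_half {c r R s t : ℝ} (hr : 0 ≤ r) (hr₂ : r ≤ 2)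
    (hs : 0 ≤ s) (hst : s ≤ t) :
    exp (-(t - s)) * (1 + s) ^ (-(4 : ℝ)) * (1 + (R - c * s) ^ 2 / (1 + s)) ^ (-(3 : ℝ))
      ≤ 8 ^ 4 * (2 * (1 + c ^ 2)) ^ 2 * (1 + t) ^ (-(2 : ℝ)) * (1 + R ^ 2 / (1 + t)) ^ (-r)
        * exp ((s - t) / 2) := by
  have ht : 0 ≤ t := hs.trans hst
  set K := 2 * (1 + c ^ 2)
  have hK : 1 ≤ K := by nlinarith [sq_nonneg c]
  have hPA : 1 + R ^ 2 / (1 + t) ≤ K * (1 + t) * (1 + (R - c * s) ^ 2 / (1 + s)) :=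
    calc 1 + R ^ 2 / (1 + t) ≤ 1 + R ^ 2 / (1 + s) := by gcongr
      _ ≤ K * (1 + s) * (1 + (R - c * s) ^ 2 / (1 + s)) :=
        one_add_sq_div_le_mul_one_add_sub_sq_div c R hs
      _ ≤ K * (1 + t) * (1 + (R - c * s) ^ 2 / (1 + s)) := by gcongr
  have hwave := rpow_neg_le_rpow_mul_rpow_neg (p := 3) (q := 2)
    (le_add_of_nonneg_right (by positivity)) (by positivity) (by nlinarith) hPA hr (by linarith)
    hr₂
  calc _ ≤ exp (-(t - s)) * (1 + s) ^ (-(4 : ℝ))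
          * ((K * (1 + t)) ^ (2 : ℝ) * (1 + R ^ 2 / (1 + t)) ^ (-r)) := by gcongr
    _ = exp (-(t - s)) * (1 + s) ^ (-(4 : ℝ)) * (1 + t) ^ 2
          * (K ^ 2 * (1 + R ^ 2 / (1 + t)) ^ (-r)) := by rw [rpow_two]; ring
    _ ≤ 8 ^ 4 * (1 + t) ^ (-(2 : ℝ)) * exp ((s - t) / 2)
          * (K ^ 2 * (1 + R ^ 2 / (1 + t)) ^ (-r)) :=
      mul_le_mul_of_nonneg_right (exp_mul_one_add_rpow_neg_four_le hs hst) (by positivity)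
    _ = _ := by ring

theorem stmt_16_general (c r : ℝ) (hr₁ : 3 / 2 < r) (hr₂ : r ≤ 2) :
    ∃ C > 0, ∀ (t : ℝ), 0 ≤ t → ∀ x : EuclideanSpace ℝ (Fin 3),
      (∫ s in (0 : ℝ)..t,
          Real.exp (-(t - s)) * (1 + s) ^ (-(4 : ℝ)) *
            (1 + (‖x‖ - c * s) ^ 2 / (1 + s)) ^ (-(3 : ℝ)))
        ≤ C * (1 + t) ^ (-(2 : ℝ)) * (1 + ‖x‖ ^ 2 / (1 + t)) ^ (-r) := by
  refine ⟨2 * (8 ^ 4 * (2 * (1 + c ^ 2)) ^ 2), by positivity, fun t ht x => ?_⟩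
  set M := 8 ^ 4 * (2 * (1 + c ^ 2)) ^ 2 * (1 + t) ^ (-(2 : ℝ))
    * (1 + ‖x‖ ^ 2 / (1 + t)) ^ (-r)
  calc _ ≤ ∫ s in (0 : ℝ)..t, M * exp ((s - t) / 2) := by
        rw [intervalIntegral.integral_of_le ht, intervalIntegral.integral_of_le ht]
        refine setIntegral_mono_of_nonneg (fun s hs => ?_) (fun s hs => ?_)
          (Continuous.integrableOn_Ioc (by fun_prop))
        · have hs₀ : 0 < s := hs.1
          positivity
        · exact exp_mul_rpow_mul_rpow_le_mul_exp_half (by linarith) hr₂ hs.1.le hs.2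
    _ = M * ∫ s in (0 : ℝ)..t, exp ((s - t) / 2) := intervalIntegral.integral_const_mul _ _
    _ ≤ M * 2 := by gcongr; exact integral_exp_sub_div_two_le 0 t
    _ = _ := by ring

theorem stmt_16 (c r : ℝ) (hc : 0 < c) (hr₁ : 3 / 2 < r) (hr₂ : r ≤ 2) :
    ∃ C > 0, ∀ (t : ℝ), 0 ≤ t → ∀ x : EuclideanSpace ℝ (Fin 3),
      (∫ s in (0 : ℝ)..t,
          Real.exp (-(t - s)) * (1 + s) ^ (-(4 : ℝ)) *
            (1 + (‖x‖ - c * s) ^ 2 / (1 + s)) ^ (-(3 : ℝ)))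
        ≤ C * (1 + t) ^ (-(2 : ℝ)) * (1 + ‖x‖ ^ 2 / (1 + t)) ^ (-r) :=
  stmt_16_general c r hr₁ hr₂
end
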